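/- Breaking the latest 0-link at a dart x in a hypermap M changes the number of connected components by either 0 or 1: nc(B M 0 x) equals nc(M) or nc(M) + 1, and it equals nc(M) + 1 exactly when x and α₀(x) are not connected in B M 0 x. -/
import Mathlib


open scoped Classical

/-- Dimensions 0 and 1. -/
inductive Dim : Type
  | zero : Dim
  | one : Dim
deriving DecidableEq

/-- Free maps: empty map, dart insertion, dart linking at a dimension. -/
inductive Fmap : Type
  | V : Fmap
  | I : Fmap → Nat → Fmap
  | L : Fmap → Dim → Nat → Nat → Fmap

namespace Fmap

/-- The nil (exception) dart. -/
def nil : Nat := 0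

/-- A dart exists in the map. -/
def exd : Fmap → Nat → Prop
  | V, _ => False
  | I m0 x, z => z = x ∨ exd m0 z
  | L m0 _ _ _, z => exd m0 z

/-- The (partial) k-successor α_k, with nil for undefined. -/
def A : Fmap → Dim → Nat → Nat
  | V, _, _ => nil
  | I m0 _, k, z => A m0 k z
  | L m0 k0 x y, k, z =>
      if k = k0 then (if z = x then y else A m0 k z) else A m0 k z

/-- The (partial) k-predecessor. -/
def A_1 : Fmap → Dim → Nat → Nat
  | V, _, _ => nil
  | I m0 _, k, z => A_1 m0 k z
  | L m0 k0 x y, k, z =>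
      if k = k0 then (if z = y then x else A_1 m0 k z) else A_1 m0 k z

/-- z has a k-successor. -/
def succd (m : Fmap) (k : Dim) (z : Nat) : Prop := A m k z ≠ nil

/-- z has a k-predecessor. -/
def predd (m : Fmap) (k : Dim) (z : Nat) : Prop := A_1 m k z ≠ nil

/-- Bottom dart of the open k-orbit of z. -/
def bottom : Fmap → Dim → Nat → Nat
  | V, _, _ => nil
  | I m0 x, k, z => if z = x then z else bottom m0 k z
  | L m0 k0 x y, k, z =>
      if k = k0 then
        (if bottom m0 k z = y then bottom m0 k x else bottom m0 k z)
      else bottom m0 k z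

/-- Top dart of the open k-orbit of z. -/
def top : Fmap → Dim → Nat → Nat
  | V, _, _ => nil
  | I m0 x, k, z => if z = x then z else top m0 k z
  | L m0 k0 x y, k, z =>
      if k = k0 then
        (if top m0 k z = x then top m0 k y else top m0 k z)
      else top m0 k z

/-- Closure of A: a permutation of existing darts. -/
def cA : Fmap → Dim → Nat → Nat
  | V, _, _ => nil
  | I m0 x, k, z => if z = x then z else cA m0 k z
  | L m0 k0 x y, k, z =>
      if k = k0 then
        (if z = x then y
         else if z = top m0 k y then bottom m0 k x
         else cA m0 k z)
      else cA m0 k z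

/-- Closure of A_1: the inverse permutation of cA. -/
def cA_1 : Fmap → Dim → Nat → Nat
  | V, _, _ => nil
  | I m0 x, k, z => if z = x then z else cA_1 m0 k z
  | L m0 k0 x y, k, z =>
      if k = k0 then
        (if z = y then x
         else if z = bottom m0 k x then top m0 k y
         else cA_1 m0 k z)
      else cA_1 m0 k z

/-- Precondition for inserting a dart. -/
def prec_I (m : Fmap) (x : Nat) : Prop := x ≠ nil ∧ ¬ exd m x

/-- Precondition for linking two darts at a dimension (keeping orbits open). -/
def prec_L (m : Fmap) (k : Dim) (x y : Nat) : Prop :=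
  exd m x ∧ exd m y ∧ ¬ succd m k x ∧ ¬ predd m k y ∧ cA m k x ≠ y

/-- The hypermap invariant. -/
def inv_hmap : Fmap → Prop
  | V => True
  | I m0 x => inv_hmap m0 ∧ prec_I m0 x
  | L m0 k0 x y => inv_hmap m0 ∧ prec_L m0 k0 x y

/-- The closed face map cF, corresponding to φ = α₁⁻¹ ∘ α₀⁻¹. -/
def cF (m : Fmap) (z : Nat) : Nat := cA_1 m Dim.one (cA_1 m Dim.zero z)

/-- Two darts are in the same face (existence of a cF-path). -/
def expf (m : Fmap) (z t : Nat) : Prop := exd m z ∧ ∃ n : ℕ, (cF m)^[n] z = t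

/-- Two darts are in the same edge (existence of a (cA zero)-path). -/
def expe (m : Fmap) (z t : Nat) : Prop := exd m z ∧ ∃ n : ℕ, (fun w => cA m Dim.zero w)^[n] z = t

/-- Two darts are in the same connected component. -/
def eqc : Fmap → Nat → Nat → Prop
  | V, _, _ => False
  | I m0 x, z, t => (z = x ∧ t = x) ∨ eqc m0 z t
  | L m0 _ x y, z, t =>
      eqc m0 z t ∨ (eqc m0 z x ∧ eqc m0 y t) ∨ (eqc m0 z y ∧ eqc m0 x t)

/-- Number of darts. -/
def nd : Fmap → ℤ
  | V => 0
  | I m0 _ => nd m0 + 1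
  | L m0 _ _ _ => nd m0

/-- Number of vertices. -/
def nv : Fmap → ℤ
  | V => 0
  | I m0 _ => nv m0 + 1
  | L m0 Dim.zero _ _ => nv m0
  | L m0 Dim.one _ _ => nv m0 - 1

/-- Number of edges. -/
def ne : Fmap → ℤ
  | V => 0
  | I m0 _ => ne m0 + 1
  | L m0 Dim.zero _ _ => ne m0 - 1
  | L m0 Dim.one _ _ => ne m0

/-- Number of faces. -/
noncomputable def nf : Fmap → ℤ
  | V => 0
  | I m0 _ => nf m0 + 1
  | L m0 Dim.zero x y => if expf m0 (cA_1 m0 Dim.one x) y then nf m0 + 1 else nf m0 - 1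
  | L m0 Dim.one x y => if expf m0 x (cA m0 Dim.zero y) then nf m0 + 1 else nf m0 - 1

/-- Number of connected components. -/
noncomputable def nc : Fmap → ℤ
  | V => 0
  | I m0 _ => nc m0 + 1
  | L m0 _ x y => if eqc m0 x y then nc m0 else nc m0 - 1

/-- Euler characteristic. -/
noncomputable def ec (m : Fmap) : ℤ := nv m + ne m + nf m - nd m

/-- Genus. -/
noncomputable def genus (m : Fmap) : ℤ := nc m - ec m / 2

/-- Planarity. -/
def planar (m : Fmap) : Prop := genus m = 0

/-- Breaking the latest forward k-link of x. -/
def B : Fmap → Dim → Nat → Fmap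
  | V, _, _ => V
  | I m0 x0, k, x => I (B m0 k x) x0
  | L m0 k0 x0 y0, k, x =>
      if k = k0 ∧ x = x0 then m0 else L (B m0 k x) k0 x0 y0

/-- Breaking all the 0-links of the darts of a list, first one first. -/
def Bl (m : Fmap) : List (Nat × Bool) → Fmap
  | [] => m
  | (x, _) :: l0 => Bl (B m Dim.zero x) l0

/-- The dart representing the face coded by a double-link (x, b). -/
def faceDart (m : Fmap) : Nat × Bool → Nat
  | (x, b) => if b then A m Dim.zero x else bottom m Dim.zero x

/-- The edge of x is distinct from the edges of the darts of a list. -/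
def distinct_edge_list (m : Fmap) (x : Nat) : List (Nat × Bool) → Prop
  | [] => True
  | (x', _) :: l0 => distinct_edge_list m x l0 ∧ ¬ expe m x x'

/-- Ring condition (0): unicity of edges, and each dart 0-linked. -/
def pre_ring0 (m : Fmap) : List (Nat × Bool) → Prop
  | [] => True
  | (x, _) :: l0 => pre_ring0 m l0 ∧ distinct_edge_list m x l0 ∧ succd m Dim.zero x

/-- Adjacency of the faces coded by two double-links. -/
def adjacent_faces (m : Fmap) : Nat × Bool → Nat × Bool → Prop
  | (x, b), (x', b') =>
      let y := A m Dim.zero x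
      let y' := A m Dim.zero x'
      let x0 := bottom m Dim.zero x
      let x'0 := bottom m Dim.zero x'
      if b then (if b' then expf m x0 y' else expf m x0 x'0)
      else (if b' then expf m y y' else expf m y x'0)

/-- Ring condition (1): continuity. -/
def pre_ring1 (m : Fmap) : List (Nat × Bool) → Prop
  | [] => True
  | xb :: l0 =>
      pre_ring1 m l0 ∧
      match l0 with
      | [] => True
      | xb' :: _ => adjacent_faces m xb xb'

/-- Last element of a list of double-links (with default). -/
def lastd : List (Nat × Bool) → Nat × Bool
  | [] => (nil, true)
  | [a] => a
  | _ :: a :: l0 => lastd (a :: l0)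

/-- Ring condition (2): circularity. -/
def pre_ring2 (m : Fmap) : List (Nat × Bool) → Prop
  | [] => True
  | (x, b) :: l0 =>
      match l0 with
      | [] => expf m (A m Dim.zero x) (bottom m Dim.zero x)
      | _ :: _ => adjacent_faces m (lastd l0) (x, b)

/-- The faces coded by two double-links are distinct. -/
def distinct_faces (m : Fmap) (xb xb' : Nat × Bool) : Prop :=
  ¬ expf m (faceDart m xb) (faceDart m xb')

/-- The face of xb is distinct from the faces of a list. -/
def distinct_face_list (m : Fmap) (xb : Nat × Bool) : List (Nat × Bool) → Prop
  | [] => True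
  | xb' :: l0 => distinct_face_list m xb l0 ∧ distinct_faces m xb xb'

/-- Ring condition (3): simplicity. -/
def pre_ring3 (m : Fmap) : List (Nat × Bool) → Prop
  | [] => True
  | xb :: l0 => pre_ring3 m l0 ∧ distinct_face_list m xb l0

/-- A ring of faces. -/
def ring (m : Fmap) (l : List (Nat × Bool)) : Prop :=
  l ≠ [] ∧ pre_ring0 m l ∧ pre_ring1 m l ∧ pre_ring2 m l ∧ pre_ring3 m l

end Fmap

namespace Fmap

lemma succ_exd (m : Fmap) (k : Dim) (z : Nat) (h1 : inv_hmap m) (h2 : A m k z ≠ nil) :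
    exd m z := by
  induction m with
  | V => exact absurd rfl h2
  | I m0 x0 ih => exact Or.inr (ih h1.1 h2)
  | L m0 k0 x0 y0 ih =>
    obtain ⟨hm, hx, hy, -, -, -⟩ := h1
    simp only [A] at h2
    show exd m0 z
    split_ifs at h2 with hk hz
    · subst hz; exact hx
    · exact ih hm h2
    · exact ih hm h2

lemma exd_A (m : Fmap) (k : Dim) (z : Nat) (h1 : inv_hmap m) (h2 : A m k z ≠ nil) :
    exd m (A m k z) := by
  induction m with
  | V => exact absurd rfl h2
  | I m0 x0 ih => exact Or.inr (ih h1.1 h2)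
  | L m0 k0 x0 y0 ih =>
    obtain ⟨hm, hx, hy, -⟩ := h1
    show exd m0 (A (L m0 k0 x0 y0) k z)
    simp only [A] at h2 ⊢
    split_ifs at h2 ⊢ with hk hz
    · exact hy
    · exact ih hm h2
    · exact ih hm h2

lemma eqc_symm (m : Fmap) : ∀ z t, eqc m z t → eqc m t z := by
  induction m with
  | V => intro z t h; exact h
  | I m0 x0 ih =>
    intro z t h
    rcases h with ⟨h1, h2⟩ | h
    · exact Or.inl ⟨h2, h1⟩
    · exact Or.inr (ih _ _ h)
  | L m0 k0 x0 y0 ih =>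
    intro z t h
    rcases h with h | ⟨h1, h2⟩ | ⟨h1, h2⟩
    · exact Or.inl (ih _ _ h)
    · exact Or.inr (Or.inr ⟨ih _ _ h2, ih _ _ h1⟩)
    · exact Or.inr (Or.inl ⟨ih _ _ h2, ih _ _ h1⟩)

lemma eqc_trans (m : Fmap) : ∀ z t u, eqc m z t → eqc m t u → eqc m z u := by
  induction m with
  | V => intro z t u h; exact h.elim
  | I m0 x0 ih =>
    intro z t u h1 h2
    rcases h1 with ⟨hz, ht⟩ | h1 <;> rcases h2 with ⟨ht2, hu⟩ | h2
    · exact Or.inl ⟨hz, hu⟩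
    · subst hz; subst ht; exact Or.inr h2
    · subst ht2; subst hu; exact Or.inr h1
    · exact Or.inr (ih _ _ _ h1 h2)
  | L m0 k0 x0 y0 ih =>
    intro z t u h1 h2
    rcases h1 with h1 | ⟨ha, hb⟩ | ⟨ha, hb⟩ <;>
      rcases h2 with h2 | ⟨hc, hd⟩ | ⟨hc, hd⟩
    · exact Or.inl (ih _ _ _ h1 h2)
    · exact Or.inr (Or.inl ⟨ih _ _ _ h1 hc, hd⟩)
    · exact Or.inr (Or.inr ⟨ih _ _ _ h1 hc, hd⟩)
    · exact Or.inr (Or.inl ⟨ha, ih _ _ _ hb h2⟩)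
    · exact Or.inr (Or.inl ⟨ha, hd⟩)
    · exact Or.inl (ih _ _ _ ha hd)
    · exact Or.inr (Or.inr ⟨ha, ih _ _ _ hb h2⟩)
    · exact Or.inl (ih _ _ _ ha hd)
    · exact Or.inr (Or.inr ⟨ha, hd⟩)

/-- Adding an (open) edge p–q to a relation R. -/
def ae (R : Nat → Nat → Prop) (p q u v : Nat) : Prop :=
  R u v ∨ (R u p ∧ R q v) ∨ (R u q ∧ R p v)

lemma ae_comm_mp (R : Nat → Nat → Prop) (htr : ∀ a b c, R a b → R b c → R a c)
    (p q p' q' u v : Nat) :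
    ae (ae R p q) p' q' u v → ae (ae R p' q') p q u v := by
  rintro (h | ⟨h1, h2⟩ | ⟨h1, h2⟩)
  · rcases h with h | ⟨ha, hb⟩ | ⟨ha, hb⟩
    · exact Or.inl (Or.inl h)
    · exact Or.inr (Or.inl ⟨Or.inl ha, Or.inl hb⟩)
    · exact Or.inr (Or.inr ⟨Or.inl ha, Or.inl hb⟩)
  · rcases h1 with h1 | ⟨ha, hb⟩ | ⟨ha, hb⟩ <;>
      rcases h2 with h2 | ⟨hc, hd⟩ | ⟨hc, hd⟩
    · exact Or.inl (Or.inr (Or.inl ⟨h1, h2⟩))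
    · exact Or.inr (Or.inl ⟨Or.inr (Or.inl ⟨h1, hc⟩), Or.inl hd⟩)
    · exact Or.inr (Or.inr ⟨Or.inr (Or.inl ⟨h1, hc⟩), Or.inl hd⟩)
    · exact Or.inr (Or.inl ⟨Or.inl ha, Or.inr (Or.inl ⟨hb, h2⟩)⟩)
    · exact Or.inr (Or.inl ⟨Or.inl ha, Or.inl hd⟩)
    · exact Or.inl (Or.inl (htr _ _ _ ha hd))
    · exact Or.inr (Or.inr ⟨Or.inl ha, Or.inr (Or.inl ⟨hb, h2⟩)⟩)
    · exact Or.inl (Or.inl (htr _ _ _ ha hd))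
    · exact Or.inr (Or.inr ⟨Or.inl ha, Or.inl hd⟩)
  · rcases h1 with h1 | ⟨ha, hb⟩ | ⟨ha, hb⟩ <;>
      rcases h2 with h2 | ⟨hc, hd⟩ | ⟨hc, hd⟩
    · exact Or.inl (Or.inr (Or.inr ⟨h1, h2⟩))
    · exact Or.inr (Or.inl ⟨Or.inr (Or.inr ⟨h1, hc⟩), Or.inl hd⟩)
    · exact Or.inr (Or.inr ⟨Or.inr (Or.inr ⟨h1, hc⟩), Or.inl hd⟩)
    · exact Or.inr (Or.inl ⟨Or.inl ha, Or.inr (Or.inr ⟨hb, h2⟩)⟩)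
    · exact Or.inr (Or.inl ⟨Or.inl ha, Or.inl hd⟩)
    · exact Or.inl (Or.inl (htr _ _ _ ha hd))
    · exact Or.inr (Or.inr ⟨Or.inl ha, Or.inr (Or.inr ⟨hb, h2⟩)⟩)
    · exact Or.inl (Or.inl (htr _ _ _ ha hd))
    · exact Or.inr (Or.inr ⟨Or.inl ha, Or.inl hd⟩)

lemma ae_comm_iff (R : Nat → Nat → Prop) (htr : ∀ a b c, R a b → R b c → R a c)
    (p q p' q' u v : Nat) :
    ae (ae R p q) p' q' u v ↔ ae (ae R p' q') p q u v :=
  ⟨ae_comm_mp R htr p q p' q' u v, ae_comm_mp R htr p' q' p q u v⟩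

lemma eqc_B_iff : ∀ (m : Fmap) (x : Nat), inv_hmap m → succd m Dim.zero x →
    ∀ a b, eqc m a b ↔ ae (eqc (B m Dim.zero x)) x (A m Dim.zero x) a b := by
  intro m x
  induction m with
  | V => intro _ h2; exact absurd rfl h2
  | I m0 x0 ih =>
    intro h1 h2 a b
    obtain ⟨hm0, hx0nil, hx0⟩ := h1
    have h2' : succd m0 Dim.zero x := h2
    have hx : exd m0 x := succ_exd m0 Dim.zero x hm0 h2'
    have hy : exd m0 (A m0 Dim.zero x) := exd_A m0 Dim.zero x hm0 h2'
    have hxne : x ≠ x0 := fun h => hx0 (h ▸ hx)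
    have hyne : A m0 Dim.zero x ≠ x0 := fun h => hx0 (h ▸ hy)
    have IH := ih hm0 h2' a b
    simp only [eqc, ae, A, B] at *
    tauto
  | L m0 k0 x0 y0 ih =>
    intro h1 h2 a b
    obtain ⟨hm0, hpl⟩ := h1
    by_cases hc : Dim.zero = k0 ∧ x = x0
    · obtain ⟨hk, hx⟩ := hc
      subst hk; subst hx
      have hB : B (L m0 Dim.zero x y0) Dim.zero x = m0 := by simp [B]
      have hA : A (L m0 Dim.zero x y0) Dim.zero x = y0 := by simp [A]
      rw [hB, hA]
      simp only [eqc, ae]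
    · have hA : A (L m0 k0 x0 y0) Dim.zero x = A m0 Dim.zero x := by
        simp only [A]; split_ifs with hk hxx
        · exact absurd ⟨hk, hxx⟩ hc
        · rfl
        · rfl
      have hB : B (L m0 k0 x0 y0) Dim.zero x = L (B m0 Dim.zero x) k0 x0 y0 := by
        simp only [B, if_neg hc]
      have h2' : succd m0 Dim.zero x := by
        unfold succd at h2 ⊢; rwa [hA] at h2
      have IH := ih hm0 h2'
      rw [hB, hA]
      show ae (eqc m0) x0 y0 a b ↔
        ae (ae (eqc (B m0 Dim.zero x)) x0 y0) x (A m0 Dim.zero x) a b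
      rw [ae_comm_iff _ (eqc_trans _) x0 y0 x (A m0 Dim.zero x) a b]
      simp only [ae, IH]

end Fmap

open Fmap
/-- Breaking a 0-link changes the number of components by 0 or 1,
and by 1 exactly when it disconnects x from its 0-successor. -/
theorem nc_B0 (m : Fmap) (x : Nat) (h1 : inv_hmap m) (h2 : succd m Dim.zero x) :
    (nc (B m Dim.zero x) = nc m ∨ nc (B m Dim.zero x) = nc m + 1) ∧
    (nc (B m Dim.zero x) = nc m + 1 ↔ ¬ eqc (B m Dim.zero x) x (A m Dim.zero x)) := by
  induction m with
  | V => exact absurd rfl h2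
  | I m0 x0 ih =>
    obtain ⟨hm0, hx0nil, hx0⟩ := h1
    have h2' : succd m0 Dim.zero x := h2
    have hx : exd m0 x := succ_exd m0 Dim.zero x hm0 h2'
    have hxne : x ≠ x0 := fun h => hx0 (h ▸ hx)
    obtain ⟨IH1, IH2⟩ := ih hm0 h2'
    have heq : eqc (B (I m0 x0) Dim.zero x) x (A (I m0 x0) Dim.zero x) ↔
        eqc (B m0 Dim.zero x) x (A m0 Dim.zero x) := by
      simp only [B, A, eqc]
      constructor
      · rintro (⟨h, -⟩ | h)
        · exact absurd h hxne
        · exact h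
      · exact Or.inr
    have hn1 : nc (B (I m0 x0) Dim.zero x) = nc (B m0 Dim.zero x) + 1 := by simp [B, nc]
    have hn2 : nc (I m0 x0) = nc m0 + 1 := by simp [nc]
    rw [heq, hn1, hn2]
    constructor
    · omega
    · rw [← IH2]; omega
  | L m0 k0 x0 y0 ih =>
    obtain ⟨hm0, hpl⟩ := h1
    by_cases hc : Dim.zero = k0 ∧ x = x0
    · obtain ⟨hk, hx⟩ := hc
      subst hk; subst hx
      have hB : B (L m0 Dim.zero x y0) Dim.zero x = m0 := by simp [B]
      have hA : A (L m0 Dim.zero x y0) Dim.zero x = y0 := by simp [A]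
      have hn : nc (L m0 Dim.zero x y0) = if eqc m0 x y0 then nc m0 else nc m0 - 1 := by
        simp [nc]
      rw [hB, hA, hn]
      by_cases hq : eqc m0 x y0
      · rw [if_pos hq]
        refine ⟨Or.inl rfl, ?_⟩
        constructor
        · intro h; omega
        · intro h; exact absurd hq h
      · rw [if_neg hq]
        refine ⟨Or.inr (by omega), ?_⟩
        constructor
        · intro _; exact hq
        · intro _; omega
    · have hA : A (L m0 k0 x0 y0) Dim.zero x = A m0 Dim.zero x := by
        simp only [A]; split_ifs with hk hxx
        · exact absurd ⟨hk, hxx⟩ hc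
        · rfl
        · rfl
      have hB : B (L m0 k0 x0 y0) Dim.zero x = L (B m0 Dim.zero x) k0 x0 y0 := by
        simp only [B, if_neg hc]
      have h2' : succd m0 Dim.zero x := by
        unfold succd at h2 ⊢; rwa [hA] at h2
      obtain ⟨IH1, IH2⟩ := ih hm0 h2'
      have hsym : ∀ z t, eqc (B m0 Dim.zero x) z t → eqc (B m0 Dim.zero x) t z :=
        eqc_symm _
      have htr : ∀ z t u, eqc (B m0 Dim.zero x) z t → eqc (B m0 Dim.zero x) t u →
          eqc (B m0 Dim.zero x) z u := eqc_trans _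
      have hkey := eqc_B_iff m0 x hm0 h2' x0 y0
      simp only [ae] at hkey
      have hG : eqc (L (B m0 Dim.zero x) k0 x0 y0) x (A m0 Dim.zero x) ↔
          (eqc (B m0 Dim.zero x) x (A m0 Dim.zero x) ∨
            (eqc (B m0 Dim.zero x) x x0 ∧ eqc (B m0 Dim.zero x) y0 (A m0 Dim.zero x)) ∨
            (eqc (B m0 Dim.zero x) x y0 ∧ eqc (B m0 Dim.zero x) x0 (A m0 Dim.zero x))) := by
        simp only [eqc]
      have hn1 : nc (L (B m0 Dim.zero x) k0 x0 y0) =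
          if eqc (B m0 Dim.zero x) x0 y0 then nc (B m0 Dim.zero x)
          else nc (B m0 Dim.zero x) - 1 := by simp [nc]
      have hn2 : nc (L m0 k0 x0 y0) = if eqc m0 x0 y0 then nc m0 else nc m0 - 1 := by
        simp [nc]
      rw [hB, hA, hn1, hn2, hG]
      set E := eqc (B m0 Dim.zero x) with hE
      set y := A m0 Dim.zero x with hy
      by_cases hc' : E x y
      · have hncB : nc (B m0 Dim.zero x) = nc m0 := by
          rcases IH1 with h | h
          · exact h
          · exact absurd hc' (IH2.mp h)
        have hd : eqc m0 x0 y0 ↔ E x0 y0 := by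
          rw [hkey]
          constructor
          · rintro (h | ⟨ha, hb⟩ | ⟨ha, hb⟩)
            · exact h
            · exact htr _ _ _ ha (htr _ _ _ hc' hb)
            · exact htr _ _ _ ha (htr _ _ _ (hsym _ _ hc') hb)
          · exact Or.inl
        rw [hncB]
        by_cases hq : E x0 y0
        · rw [if_pos hq, if_pos (hd.mpr hq)]
          refine ⟨Or.inl rfl, ?_⟩
          constructor
          · intro h; omega
          · intro h; exact absurd (Or.inl hc') h
        · rw [if_neg hq, if_neg (fun h => hq (hd.mp h))]
          refine ⟨Or.inl rfl, ?_⟩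
          constructor
          · intro h; omega
          · intro h; exact absurd (Or.inl hc') h
      · have hncB : nc (B m0 Dim.zero x) = nc m0 + 1 := IH2.mpr hc'
        by_cases hq' : E x0 y0
        · have hd0 : eqc m0 x0 y0 := hkey.mpr (Or.inl hq')
          have hnG : ¬ (E x y ∨ (E x x0 ∧ E y0 y) ∨ (E x y0 ∧ E x0 y)) := by
            rintro (h | ⟨ha, hb⟩ | ⟨ha, hb⟩)
            · exact hc' h
            · exact hc' (htr _ _ _ ha (htr _ _ _ hq' hb))
            · exact hc' (htr _ _ _ ha (htr _ _ _ (hsym _ _ hq') hb))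
          rw [if_pos hq', if_pos hd0, hncB]
          exact ⟨Or.inr rfl, ⟨fun _ => hnG, fun _ => rfl⟩⟩
        · by_cases hG' : (E x x0 ∧ E y0 y) ∨ (E x y0 ∧ E x0 y)
          · have hd0 : eqc m0 x0 y0 := by
              rw [hkey]
              rcases hG' with ⟨ha, hb⟩ | ⟨ha, hb⟩
              · exact Or.inr (Or.inl ⟨hsym _ _ ha, hsym _ _ hb⟩)
              · exact Or.inr (Or.inr ⟨hb, ha⟩)
            rw [if_neg hq', if_pos hd0, hncB]
            refine ⟨Or.inl (by omega), ?_⟩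
            constructor
            · intro h; omega
            · intro h; exact absurd (Or.inr hG') h
          · have hd0 : ¬ eqc m0 x0 y0 := by
              rw [hkey]
              rintro (h | ⟨ha, hb⟩ | ⟨ha, hb⟩)
              · exact hq' h
              · exact hG' (Or.inl ⟨hsym _ _ ha, hsym _ _ hb⟩)
              · exact hG' (Or.inr ⟨hb, ha⟩)
            rw [if_neg hq', if_neg hd0, hncB]
            refine ⟨Or.inr (by omega), ?_⟩
            constructor
            · rintro _ (h | h)
              · exact hc' h
              · exact hG' h
            · intro _; omega
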